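/- Let Maya denote the set of Maya diagrams of virtual cardinality 0 and let k[ξ] be the polynomial ring over k in variables ξ_S, S ∈ Maya. Let φ : k[ξ] → k[δ_∞] be the k-algebra homomorphism with φ(ξ_S) = d_S. For each (m,n), let C_{m,n} be the set of m-element subsets of {-m,...,n-1}, let φ_{(m,n)} : k[x_I : I ∈ C_{m,n}] → k[δ_{m,n}] be the k-algebra homomorphism with φ_{(m,n)}(x_I) = d_I, and let ι_{(m,n)} : k[x_I : I ∈ C_{m,n}] → k[ξ] be the k-algebra homomorphism with ι_{(m,n)}(x_I) = ξ_{ℤ_{<-m} ∪ I}. Then φ is surjective and its kernel equals ⋃_{(m,n)} ι_{(m,n)}(ker φ_{(m,n)}) (this union is a directed union and is an ideal of k[ξ], equal to the ideal generated by it); hence k[δ_∞] ≅ k[ξ]/P where P is the ideal of Plücker relations ⋃_{(m,n)} ι_{(m,n)}(ker φ_{(m,n)}). -/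
import Mathlib


open MvPolynomial

set_option maxHeartbeats 2000000
set_option synthInstance.maxHeartbeats 400000

noncomputable section

/-- Row indices of the generic `(m+n) × m` matrix: integers `-m, ..., n-1`. -/
abbrev RowI (m n : ℕ) : Type := ↥(Finset.Icc (-(m : ℤ)) ((n : ℤ) - 1))

/-- Column indices: integers `-m, ..., -1`. -/
abbrev ColI (m : ℕ) : Type := ↥(Finset.Icc (-(m : ℤ)) (-1 : ℤ))

/-- `k[a]_{m,n}`, the coordinate ring of generic `(m+n) × m` matrices. -/
abbrev MatRing (k : Type) [Field k] (m n : ℕ) : Type :=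
  MvPolynomial (RowI m n × ColI m) k

/-- The maximal minor `d_I` on the rows in `I` (an `m`-element subset of `{-m,...,n-1}`). -/
def dMinor (k : Type) [Field k] (m n : ℕ) (I : Finset ℤ) (hI : I.card = m)
    (hsub : I ⊆ Finset.Icc (-(m : ℤ)) ((n : ℤ) - 1)) : MatRing k m n :=
  Matrix.det (Matrix.of fun s t : Fin m =>
    (X (⟨I.orderEmbOfFin hI s, hsub (Finset.orderEmbOfFin_mem I hI s)⟩,
       ⟨-(m : ℤ) + (t : ℕ), by
          have := t.2
          simp only [Finset.mem_Icc]
          omega⟩) : MatRing k m n))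

/-- `k[δ_{m,n}]`, the subalgebra generated by all the maximal minors. -/
def DeltaSub (k : Type) [Field k] (m n : ℕ) : Subalgebra k (MatRing k m n) :=
  Algebra.adjoin k {x | ∃ I hI hsub, x = dMinor k m n I hI hsub}

/-- The substitution homomorphism `E_{(m',n',m,n)} : k[a]_{m',n'} → k[a]_{m,n}`. -/
def Emap (k : Type) [Field k] (m n m' n' : ℕ) : MatRing k m' n' →ₐ[k] MatRing k m n :=
  aeval fun p : RowI m' n' × ColI m' =>
    if h : (p.1.1 ∈ Finset.Icc (-(m : ℤ)) ((n : ℤ) - 1)) ∧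
        (p.2.1 ∈ Finset.Icc (-(m : ℤ)) (-1 : ℤ)) then
      (X (⟨p.1.1, h.1⟩, ⟨p.2.1, h.2⟩) : MatRing k m n)
    else if p.1.1 = p.2.1 then 1 else 0


/-- The inverse limit of an inverse system of rings, realized concretely as the
subring of the product consisting of the compatible families. -/
def ringInvLim {ι : Type*} [Preorder ι] (G : ι → Type*) [∀ i, Ring (G i)]
    (f : ∀ i j : ι, i ≤ j → (G j →+* G i)) : Subring (∀ i, G i) where
  carrier := {x | ∀ (i j : ι) (h : i ≤ j), f i j h (x j) = x i}
  zero_mem' := by intro i j h; simp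
  one_mem' := by intro i j h; simp
  add_mem' := by
    intro a b ha hb i j h
    simp only [Pi.add_apply, map_add, ha i j h, hb i j h]
  mul_mem' := by
    intro a b ha hb i j h
    simp only [Pi.mul_apply, map_mul, ha i j h, hb i j h]
  neg_mem' := by
    intro a ha i j h
    simp only [Pi.neg_apply, map_neg, ha i j h]

/-- The index set: pairs of positive integers, ordered componentwise. -/
abbrev PIdx : Type := {p : ℕ × ℕ // 0 < p.1 ∧ 0 < p.2}

/-- The defining property of the system of maps `r_{(m,n,m',n')}` on maximal minors. -/
def rSysProp (k : Type) [Field k]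
    (rS : ∀ p q : PIdx, p ≤ q →
      (↥(DeltaSub k p.1.1 p.1.2) →ₐ[k] ↥(DeltaSub k q.1.1 q.1.2))) : Prop :=
  ∀ (p q : PIdx) (h : p ≤ q) (I : Finset ℤ) (hI : I.card = p.1.1)
    (hsub : I ⊆ Finset.Icc (-(p.1.1 : ℤ)) ((p.1.2 : ℤ) - 1))
    (hmem : dMinor k p.1.1 p.1.2 I hI hsub ∈ DeltaSub k p.1.1 p.1.2)
    (hcard : (Finset.Icc (-(q.1.1 : ℤ)) (-(p.1.1 : ℤ) - 1) ∪ I).card = q.1.1)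
    (hsub' : Finset.Icc (-(q.1.1 : ℤ)) (-(p.1.1 : ℤ) - 1) ∪ I ⊆
      Finset.Icc (-(q.1.1 : ℤ)) ((q.1.2 : ℤ) - 1)),
    (rS p q h ⟨dMinor k p.1.1 p.1.2 I hI hsub, hmem⟩ : MatRing k q.1.1 q.1.2) =
      dMinor k q.1.1 q.1.2 (Finset.Icc (-(q.1.1 : ℤ)) (-(p.1.1 : ℤ) - 1) ∪ I) hcard hsub'

/-- A Maya diagram of virtual cardinality 0: a subset of `ℤ` containing all sufficiently
small integers, no sufficiently large integers, with `|S ∩ ℤ_{≥0}| = |ℤ_{<0} ∖ S|`. -/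
def IsMaya (S : Set ℤ) : Prop :=
  (∃ a : ℤ, ∀ x : ℤ, x < a → x ∈ S) ∧ (∃ b : ℤ, ∀ x : ℤ, b ≤ x → x ∉ S) ∧
    (S ∩ {x : ℤ | 0 ≤ x}).ncard = ({x : ℤ | x < 0} \ S).ncard

/-- The set of Maya diagrams of virtual cardinality 0. -/
abbrev Maya : Type := {S : Set ℤ // IsMaya S}

/-- The `m`-element subsets of `{-m, ..., n-1}`, indexing the variables `x_I`. -/
abbrev CIdx (p : PIdx) : Type :=
  {I : Finset ℤ // I.card = p.1.1 ∧ I ⊆ Finset.Icc (-(p.1.1 : ℤ)) ((p.1.2 : ℤ) - 1)}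

/-- `φ_{(m,n)} : k[x_I : I ∈ C_{m,n}] → k[δ_{m,n}]`, `x_I ↦ d_I` (viewed inside
`k[a]_{m,n}`; its image is `k[δ_{m,n}]`). -/
def phiFin (k : Type) [Field k] (p : PIdx) :
    MvPolynomial (CIdx p) k →ₐ[k] MatRing k p.1.1 p.1.2 :=
  aeval fun I : CIdx p => dMinor k p.1.1 p.1.2 I.1 I.2.1 I.2.2

/-! ### Auxiliary material for `stmt4` -/

section Aux

instance : Nonempty PIdx := ⟨⟨(1, 1), Nat.one_pos, Nat.one_pos⟩⟩

instance : IsDirected PIdx (· ≤ ·) := by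
  constructor
  rintro ⟨⟨a1, a2⟩, ha1, ha2⟩ ⟨⟨b1, b2⟩, hb1, hb2⟩
  refine ⟨⟨(max a1 b1, max a2 b2), ?_, ?_⟩, ?_, ?_⟩ <;>
    simp only [Subtype.mk_le_mk, Prod.mk_le_mk, le_max_iff] <;> omega

lemma PIdx.le1 {p q : PIdx} (h : p ≤ q) : p.1.1 ≤ q.1.1 := h.1

lemma PIdx.le2 {p q : PIdx} (h : p ≤ q) : p.1.2 ≤ q.1.2 := h.2

variable {k : Type} [Field k]

lemma dMinor_mem {m n : ℕ} {I : Finset ℤ} (hI : I.card = m)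
    (hsub : I ⊆ Finset.Icc (-(m : ℤ)) ((n : ℤ) - 1)) :
    dMinor k m n I hI hsub ∈ DeltaSub k m n :=
  Algebra.subset_adjoin ⟨I, hI, hsub, rfl⟩

/-- The minor `d_I` as an element of the subalgebra `k[δ_{m,n}]`. -/
def genD (p : PIdx) (I : CIdx p) : ↥(DeltaSub k p.1.1 p.1.2) :=
  ⟨dMinor k p.1.1 p.1.2 I.1 I.2.1 I.2.2, dMinor_mem I.2.1 I.2.2⟩

/-- `φ_{(m,n)}` corestricted to the subalgebra `k[δ_{m,n}]`. -/
def phiFin' (k : Type) [Field k] (p : PIdx) :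
    MvPolynomial (CIdx p) k →ₐ[k] ↥(DeltaSub k p.1.1 p.1.2) :=
  aeval (genD p)

lemma val_phiFin' (p : PIdx) (g : MvPolynomial (CIdx p) k) :
    (phiFin' k p g : MatRing k p.1.1 p.1.2) = phiFin k p g := by
  have h : (DeltaSub k p.1.1 p.1.2).val.comp (phiFin' k p) = phiFin k p := by
    apply MvPolynomial.algHom_ext
    intro I
    simp [phiFin', phiFin, genD]
  exact DFunLike.congr_fun h g

lemma phiFin'_surj (p : PIdx) : Function.Surjective (phiFin' k p) := by
  rintro ⟨x, hx⟩
  have : ∃ g, phiFin k p g = x := by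
    induction hx using Algebra.adjoin_induction with
    | mem x hx =>
      obtain ⟨I, hI, hsub, rfl⟩ := hx
      exact ⟨MvPolynomial.X ⟨I, hI, hsub⟩, by simp [phiFin]⟩
    | algebraMap r => exact ⟨MvPolynomial.C r, by simp [phiFin]⟩
    | add x y hx hy ihx ihy =>
      obtain ⟨g, rfl⟩ := ihx; obtain ⟨g', rfl⟩ := ihy
      exact ⟨g + g', by simp⟩
    | mul x y hx hy ihx ihy =>
      obtain ⟨g, rfl⟩ := ihx; obtain ⟨g', rfl⟩ := ihy
      exact ⟨g * g', by simp⟩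
  obtain ⟨g, hg⟩ := this
  exact ⟨g, Subtype.ext (by rw [val_phiFin']; exact hg)⟩

lemma deltaHom_ext {p : PIdx} {B : Type*} [Semiring B] [Algebra k B]
    {F G : ↥(DeltaSub k p.1.1 p.1.2) →ₐ[k] B}
    (h : ∀ I : CIdx p, F (genD p I) = G (genD p I)) : F = G := by
  have hc : F.comp (phiFin' k p) = G.comp (phiFin' k p) := by
    apply MvPolynomial.algHom_ext
    intro I
    simpa [phiFin'] using h I
  apply AlgHom.ext
  intro x
  obtain ⟨g, rfl⟩ := phiFin'_surj (k := k) p x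
  simpa using DFunLike.congr_fun hc g

/-- The interval `{-m', ..., -m-1}` prepended by `r_{(m,n,m',n')}`. -/
def prefixIcc (p q : PIdx) : Finset ℤ := Finset.Icc (-(q.1.1 : ℤ)) (-(p.1.1 : ℤ) - 1)

lemma cmap_card {p q : PIdx} (h : p ≤ q) (I : CIdx p) :
    (prefixIcc p q ∪ I.1).card = q.1.1 := by
  have hd : Disjoint (prefixIcc p q) I.1 := by
    rw [Finset.disjoint_left]
    intro x hx hxI
    have h1 := Finset.mem_Icc.mp hx
    have h2 := Finset.mem_Icc.mp (I.2.2 hxI)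
    omega
  have hc := Int.card_Icc (-(q.1.1 : ℤ)) (-(p.1.1 : ℤ) - 1)
  have hle := PIdx.le1 h
  rw [Finset.card_union_of_disjoint hd, I.2.1, prefixIcc]
  omega

lemma cmap_sub {p q : PIdx} (h : p ≤ q) (I : CIdx p) :
    prefixIcc p q ∪ I.1 ⊆ Finset.Icc (-(q.1.1 : ℤ)) ((q.1.2 : ℤ) - 1) := by
  have hle1 := PIdx.le1 h
  have hle2 := PIdx.le2 h
  have hq2 := q.2.2
  apply Finset.union_subset
  · intro x hx
    have := Finset.mem_Icc.mp hx
    rw [Finset.mem_Icc]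
    have hp := p.2.1
    omega
  · intro x hx
    have := Finset.mem_Icc.mp (I.2.2 hx)
    rw [Finset.mem_Icc]
    omega

/-- The map `C_{m,n} → C_{m',n'}`, `I ↦ {-m',...,-m-1} ∪ I`. -/
def cmap {p q : PIdx} (h : p ≤ q) (I : CIdx p) : CIdx q :=
  ⟨prefixIcc p q ∪ I.1, cmap_card h I, cmap_sub h I⟩

lemma cmap_self {p : PIdx} (I : CIdx p) : cmap (le_refl p) I = I := by
  apply Subtype.ext
  show prefixIcc p p ∪ I.1 = I.1
  rw [prefixIcc, Finset.Icc_eq_empty (by omega), Finset.empty_union]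

lemma cmap_comp {p q r : PIdx} (hpq : p ≤ q) (hqr : q ≤ r) (I : CIdx p) :
    cmap hqr (cmap hpq I) = cmap (hpq.trans hqr) I := by
  apply Subtype.ext
  show prefixIcc q r ∪ (prefixIcc p q ∪ I.1) = prefixIcc p r ∪ I.1
  rw [← Finset.union_assoc]
  congr 1
  have h1 := PIdx.le1 hpq
  have h2 := PIdx.le1 hqr
  ext x
  simp only [prefixIcc, Finset.mem_union, Finset.mem_Icc]
  omega

section WithRS

variable (rS : ∀ p q : PIdx, p ≤ q →
    (↥(DeltaSub k p.1.1 p.1.2) →ₐ[k] ↥(DeltaSub k q.1.1 q.1.2)))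
variable (hrS : rSysProp k rS)

include hrS in
lemma rS_genD {p q : PIdx} (h : p ≤ q) (I : CIdx p) :
    rS p q h (genD p I) = genD q (cmap h I) :=
  Subtype.ext (hrS p q h I.1 I.2.1 I.2.2 (dMinor_mem I.2.1 I.2.2)
    (cmap_card h I) (cmap_sub h I))

include hrS in
lemma dirSys :
    DirectedSystem (fun p : PIdx => ↥(DeltaSub k p.1.1 p.1.2))
      (fun p q h => ⇑(rS p q h)) := by
  constructor
  · intro p x
    have h : rS p p le_rfl = AlgHom.id k _ := by
      apply deltaHom_ext
      intro I
      rw [rS_genD rS hrS le_rfl I, cmap_self]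
      rfl
    rw [h]; rfl
  · intro r q p hpq hqr x
    have h : (rS q r hqr).comp (rS p q hpq) = rS p r (hpq.trans hqr) := by
      apply deltaHom_ext
      intro I
      rw [AlgHom.comp_apply, rS_genD rS hrS hpq I, rS_genD rS hrS hqr,
        rS_genD rS hrS (hpq.trans hqr) I, cmap_comp]
    exact DFunLike.congr_fun h x

include hrS in
lemma phiFin'_factor {p q : PIdx} (h : p ≤ q) :
    (phiFin' k q).comp (MvPolynomial.rename (cmap h)) = (rS p q h).comp (phiFin' k p) := by
  apply MvPolynomial.algHom_ext
  intro I
  simp only [AlgHom.comp_apply, rename_X]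
  rw [phiFin', phiFin', aeval_X, aeval_X, rS_genD rS hrS h I]

end WithRS

/-- The key counting fact: under the boundedness assumptions, the virtual-cardinality-0
condition is equivalent to `|S ∩ {-m,...,n-1}| = m`. -/
lemma maya_count {S : Set ℤ} [DecidablePred (· ∈ S)] {m n : ℕ} (hm : 0 < m) (hn : 0 < n)
    (h1 : ∀ x : ℤ, x < -(m : ℤ) → x ∈ S) (h2 : ∀ x : ℤ, (n : ℤ) ≤ x → x ∉ S) :
    ((S ∩ {x : ℤ | 0 ≤ x}).ncard = ({x : ℤ | x < 0} \ S).ncard ↔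
      ((Finset.Icc (-(m : ℤ)) ((n : ℤ) - 1)).filter (· ∈ S)).card = m) := by
  have e1 : S ∩ {x : ℤ | 0 ≤ x} = ↑((Finset.Icc (0 : ℤ) ((n : ℤ) - 1)).filter (· ∈ S)) := by
    ext x
    simp only [Set.mem_inter_iff, Set.mem_setOf_eq, Finset.coe_filter, Finset.mem_Icc,
      Set.mem_setOf_eq]
    constructor
    · rintro ⟨hx, h0⟩
      refine ⟨⟨h0, ?_⟩, hx⟩
      by_contra hc
      exact h2 x (by omega) hx
    · rintro ⟨⟨h0, _⟩, hx⟩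
      exact ⟨hx, h0⟩
  have e2 : {x : ℤ | x < 0} \ S = ↑((Finset.Icc (-(m : ℤ)) (-1 : ℤ)).filter (· ∉ S)) := by
    ext x
    simp only [Set.mem_diff, Set.mem_setOf_eq, Finset.coe_filter, Finset.mem_Icc,
      Set.mem_setOf_eq]
    constructor
    · rintro ⟨hx, hS⟩
      refine ⟨⟨?_, by omega⟩, hS⟩
      by_contra hc
      exact hS (h1 x (by omega))
    · rintro ⟨⟨_, hx⟩, hS⟩
      exact ⟨by omega, hS⟩
  rw [e1, e2, Set.ncard_coe_finset, Set.ncard_coe_finset]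
  have hsplit : (Finset.Icc (-(m : ℤ)) ((n : ℤ) - 1)).filter (· ∈ S)
      = (Finset.Icc (-(m : ℤ)) (-1 : ℤ)).filter (· ∈ S)
        ∪ (Finset.Icc (0 : ℤ) ((n : ℤ) - 1)).filter (· ∈ S) := by
    rw [← Finset.filter_union]
    congr 1
    ext x
    simp only [Finset.mem_union, Finset.mem_Icc]
    omega
  have hdisj : Disjoint ((Finset.Icc (-(m : ℤ)) (-1 : ℤ)).filter (· ∈ S))
      ((Finset.Icc (0 : ℤ) ((n : ℤ) - 1)).filter (· ∈ S)) := by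
    rw [Finset.disjoint_left]
    intro x hx hy
    have ha := Finset.mem_Icc.mp (Finset.mem_filter.mp hx).1
    have hb := Finset.mem_Icc.mp (Finset.mem_filter.mp hy).1
    omega
  have hA : ((Finset.Icc (-(m : ℤ)) (-1 : ℤ)).filter (· ∈ S)).card
      + ((Finset.Icc (-(m : ℤ)) (-1 : ℤ)).filter (· ∉ S)).card = m := by
    rw [Finset.card_filter_add_card_filter_not]
    have := Int.card_Icc (-(m : ℤ)) (-1 : ℤ)
    omega
  rw [hsplit, Finset.card_union_of_disjoint hdisj]
  omega

lemma toMaya_isMaya (p : PIdx) (I : CIdx p) :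
    IsMaya ({x : ℤ | x < -(p.1.1 : ℤ)} ∪ (↑I.1 : Set ℤ)) := by
  classical
  have hm := p.2.1
  have hn := p.2.2
  have h1 : ∀ x : ℤ, x < -(p.1.1 : ℤ) →
      x ∈ {x : ℤ | x < -(p.1.1 : ℤ)} ∪ (↑I.1 : Set ℤ) := fun x hx => Or.inl hx
  have h2 : ∀ x : ℤ, (p.1.2 : ℤ) ≤ x →
      x ∉ {x : ℤ | x < -(p.1.1 : ℤ)} ∪ (↑I.1 : Set ℤ) := by
    rintro x hx (hc | hc)
    · simp only [Set.mem_setOf_eq] at hc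
      omega
    · have := Finset.mem_Icc.mp (I.2.2 hc)
      omega
  refine ⟨⟨-(p.1.1 : ℤ), h1⟩, ⟨(p.1.2 : ℤ), h2⟩, ?_⟩
  rw [maya_count hm hn h1 h2]
  have hf : (Finset.Icc (-(p.1.1 : ℤ)) ((p.1.2 : ℤ) - 1)).filter
      (· ∈ {x : ℤ | x < -(p.1.1 : ℤ)} ∪ (↑I.1 : Set ℤ)) = I.1 := by
    ext x
    simp only [Finset.mem_filter, Finset.mem_Icc, Set.mem_union, Set.mem_setOf_eq,
      Finset.mem_coe]
    constructor
    · rintro ⟨⟨hx1, hx2⟩, hc | hc⟩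
      · omega
      · exact hc
    · intro hx
      have := Finset.mem_Icc.mp (I.2.2 hx)
      exact ⟨⟨this.1, this.2⟩, Or.inr hx⟩
  rw [hf, I.2.1]

/-- The Maya diagram `ℤ_{<-m} ∪ I` attached to `I ∈ C_{m,n}`. -/
def toMaya (p : PIdx) (I : CIdx p) : Maya :=
  ⟨{x : ℤ | x < -(p.1.1 : ℤ)} ∪ (↑I.1 : Set ℤ), toMaya_isMaya p I⟩

lemma toMaya_cmap {p q : PIdx} (h : p ≤ q) (I : CIdx p) :
    toMaya q (cmap h I) = toMaya p I := by
  apply Subtype.ext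
  show {x : ℤ | x < -(q.1.1 : ℤ)} ∪ (↑(prefixIcc p q ∪ I.1) : Set ℤ)
      = {x : ℤ | x < -(p.1.1 : ℤ)} ∪ (↑I.1 : Set ℤ)
  have hle := PIdx.le1 h
  ext x
  simp only [Set.mem_union, Set.mem_setOf_eq, Finset.coe_union, Finset.mem_coe,
    Finset.mem_union, prefixIcc, Finset.mem_Icc]
  constructor
  · rintro (hc | hc | hc)
    · left; omega
    · left; omega
    · right; exact hc
  · rintro (hc | hc)
    · by_cases hx : x < -(q.1.1 : ℤ)
      · exact Or.inl hx
      · exact Or.inr (Or.inl ⟨by omega, by omega⟩)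
    · exact Or.inr (Or.inr hc)

/-- `p` is large enough to represent the Maya diagram `S`. -/
def mayaBound (p : PIdx) (S : Maya) : Prop :=
  (∀ x : ℤ, x < -(p.1.1 : ℤ) → x ∈ S.1) ∧ (∀ x : ℤ, (p.1.2 : ℤ) ≤ x → x ∉ S.1)

lemma mayaBound_mono {p q : PIdx} (h : p ≤ q) {S : Maya} (hp : mayaBound p S) :
    mayaBound q S := by
  have h1 := PIdx.le1 h
  have h2 := PIdx.le2 h
  exact ⟨fun x hx => hp.1 x (by omega), fun x hx => hp.2 x (by omega)⟩

lemma mayaBound_exists (S : Maya) : ∃ p : PIdx, mayaBound p S := by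
  obtain ⟨⟨a, ha⟩, ⟨b, hb⟩, _⟩ := S.2
  refine ⟨⟨((-a).toNat + 1, b.toNat + 1), Nat.succ_pos _, Nat.succ_pos _⟩, ?_, ?_⟩
  · intro x hx
    apply ha
    simp only at hx
    omega
  · intro x hx
    apply hb
    simp only at hx
    omega

open Classical in
/-- The finite part `S ∩ {-m,...,n-1}` of a Maya diagram representable at `p`. -/
def mayaFin (p : PIdx) (S : Maya) (h : mayaBound p S) : CIdx p :=
  ⟨(Finset.Icc (-(p.1.1 : ℤ)) ((p.1.2 : ℤ) - 1)).filter (· ∈ S.1),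
    (maya_count p.2.1 p.2.2 h.1 h.2).mp S.2.2.2,
    Finset.filter_subset _ _⟩

lemma mayaFin_set (p : PIdx) (S : Maya) (h : mayaBound p S) :
    S.1 = {x : ℤ | x < -(p.1.1 : ℤ)} ∪ (↑(mayaFin p S h).1 : Set ℤ) := by
  classical
  ext x
  simp only [mayaFin, Set.mem_union, Set.mem_setOf_eq, Finset.coe_filter, Set.mem_setOf_eq,
    Finset.mem_Icc]
  constructor
  · intro hx
    by_cases hlt : x < -(p.1.1 : ℤ)
    · exact Or.inl hlt
    · refine Or.inr ⟨⟨by omega, ?_⟩, hx⟩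
      by_contra hc
      exact h.2 x (by omega) hx
  · rintro (hc | hc)
    · exact h.1 x hc
    · exact hc.2

lemma toMaya_mayaFin (p : PIdx) (S : Maya) (h : mayaBound p S) :
    toMaya p (mayaFin p S h) = S :=
  Subtype.ext (mayaFin_set p S h).symm

end Aux

/-- `φ : k[ξ] → k[δ_∞]`, `ξ_S ↦ d_S`, is surjective with kernel the
(directed) union `⋃_{(m,n)} ι_{(m,n)}(ker φ_{(m,n)})` of the Plücker relations; hence
`k[δ_∞] ≅ k[ξ]/P`. -/
theorem stmt4 (k : Type) [Field k]
    (rS : ∀ p q : PIdx, p ≤ q →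
      (↥(DeltaSub k p.1.1 p.1.2) →ₐ[k] ↥(DeltaSub k q.1.1 q.1.2)))
    (hrS : rSysProp k rS)
    -- the elements `d_S ∈ k[δ_∞]` attached to Maya diagrams
    (dS : Maya → Ring.DirectLimit (fun p : PIdx => ↥(DeltaSub k p.1.1 p.1.2))
      (fun p q h => ⇑(rS p q h)))
    (hdS : ∀ (S : Maya) (p : PIdx)
      (h1 : ∀ x : ℤ, x < -(p.1.1 : ℤ) → x ∈ S.1)
      (h2 : ∀ x : ℤ, (p.1.2 : ℤ) ≤ x → x ∉ S.1)
      (I : Finset ℤ) (hIS : ∀ x : ℤ, x ∈ I ↔ x ∈ S.1 ∧ x ∈ Finset.Icc (-(p.1.1 : ℤ)) ((p.1.2 : ℤ) - 1))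
      (hI : I.card = p.1.1) (hsub : I ⊆ Finset.Icc (-(p.1.1 : ℤ)) ((p.1.2 : ℤ) - 1))
      (hmem : dMinor k p.1.1 p.1.2 I hI hsub ∈ DeltaSub k p.1.1 p.1.2),
      dS S = Ring.DirectLimit.of (fun p : PIdx => ↥(DeltaSub k p.1.1 p.1.2))
        (fun p q h => ⇑(rS p q h)) p ⟨dMinor k p.1.1 p.1.2 I hI hsub, hmem⟩)
    -- `φ : k[ξ] → k[δ_∞]`, the `k`-algebra homomorphism with `φ(ξ_S) = d_S`
    (phi : MvPolynomial Maya k →+* Ring.DirectLimit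
      (fun p : PIdx => ↥(DeltaSub k p.1.1 p.1.2)) (fun p q h => ⇑(rS p q h)))
    (hphiX : ∀ S : Maya, phi (MvPolynomial.X S) = dS S)
    (hphiC : ∀ (c : k) (p : PIdx), phi (MvPolynomial.C c) =
      Ring.DirectLimit.of (fun p : PIdx => ↥(DeltaSub k p.1.1 p.1.2))
        (fun p q h => ⇑(rS p q h)) p (algebraMap k _ c))
    -- `ι_{(m,n)} : k[x_I] → k[ξ]`, `x_I ↦ ξ_{ℤ_{<-m} ∪ I}`
    (iota : ∀ p : PIdx, MvPolynomial (CIdx p) k →ₐ[k] MvPolynomial Maya k)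
    (hiota : ∀ (p : PIdx) (I : CIdx p) (S : Maya),
      S.1 = {x : ℤ | x < -(p.1.1 : ℤ)} ∪ (↑I.1 : Set ℤ) →
      iota p (MvPolynomial.X I) = MvPolynomial.X S) :
    Function.Surjective phi ∧
      (↑(RingHom.ker phi) : Set (MvPolynomial Maya k)) =
        ⋃ p : PIdx, ⇑(iota p) '' (RingHom.ker (phiFin k p) : Set (MvPolynomial (CIdx p) k)) := by
  classical
  haveI hDS : DirectedSystem (fun p : PIdx => ↥(DeltaSub k p.1.1 p.1.2))
      (fun p q h => ⇑(rS p q h)) := dirSys rS hrS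
  haveI hDS' : DirectedSystem (fun p : PIdx => ↥(DeltaSub k p.1.1 p.1.2))
      (fun p q h => ⇑((rS p q h).toRingHom)) := hDS
  -- the key commuting identity `φ ∘ ι_{(m,n)} = of_{(m,n)} ∘ φ'_{(m,n)}`
  have key : ∀ (p : PIdx) (g : MvPolynomial (CIdx p) k),
      phi (iota p g) = Ring.DirectLimit.of (fun p : PIdx => ↥(DeltaSub k p.1.1 p.1.2))
        (fun p q h => ⇑(rS p q h)) p (phiFin' k p g) := by
    intro p
    have hcomp : phi.comp ((iota p) : MvPolynomial (CIdx p) k →+* MvPolynomial Maya k)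
        = (Ring.DirectLimit.of (fun p : PIdx => ↥(DeltaSub k p.1.1 p.1.2))
            (fun p q h => ⇑(rS p q h)) p).comp
          ((phiFin' k p) : MvPolynomial (CIdx p) k →+* ↥(DeltaSub k p.1.1 p.1.2)) := by
      apply MvPolynomial.ringHom_ext
      · intro c
        simp only [RingHom.comp_apply, RingHom.coe_coe]
        rw [show (MvPolynomial.C c : MvPolynomial (CIdx p) k)
            = algebraMap k (MvPolynomial (CIdx p) k) c from rfl,
          AlgHom.commutes, AlgHom.commutes]
        rw [show algebraMap k (MvPolynomial Maya k) c = MvPolynomial.C c from rfl]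
        exact hphiC c p
      · intro I
        simp only [RingHom.comp_apply, RingHom.coe_coe]
        have hset : (toMaya p I).1 = {x : ℤ | x < -(p.1.1 : ℤ)} ∪ (↑I.1 : Set ℤ) := rfl
        rw [hiota p I (toMaya p I) hset, hphiX]
        have h1 : ∀ x : ℤ, x < -(p.1.1 : ℤ) → x ∈ (toMaya p I).1 := fun x hx => Or.inl hx
        have h2 : ∀ x : ℤ, (p.1.2 : ℤ) ≤ x → x ∉ (toMaya p I).1 := by
          rintro x hx (hc | hc)
          · simp only [Set.mem_setOf_eq] at hc
            have := p.2.1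
            have := p.2.2
            omega
          · have := Finset.mem_Icc.mp (I.2.2 hc)
            omega
        have hIS : ∀ x : ℤ, x ∈ I.1 ↔ x ∈ (toMaya p I).1
            ∧ x ∈ Finset.Icc (-(p.1.1 : ℤ)) ((p.1.2 : ℤ) - 1) := by
          intro x
          constructor
          · intro hx
            exact ⟨Or.inr hx, I.2.2 hx⟩
          · rintro ⟨hc | hc, hIcc⟩
            · have := Finset.mem_Icc.mp hIcc
              simp only [Set.mem_setOf_eq] at hc
              omega
            · exact hc
        rw [hdS (toMaya p I) p h1 h2 I.1 hIS I.2.1 I.2.2 (dMinor_mem I.2.1 I.2.2)]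
        rw [phiFin', aeval_X]
        rfl
    intro g
    exact RingHom.congr_fun hcomp g
  constructor
  · -- surjectivity
    intro z
    obtain ⟨p, x, rfl⟩ := Ring.DirectLimit.exists_of z
    obtain ⟨g, rfl⟩ := phiFin'_surj p x
    exact ⟨iota p g, key p g⟩
  · -- kernel description
    ext f
    simp only [SetLike.mem_coe, RingHom.mem_ker, Set.mem_iUnion, Set.mem_image]
    constructor
    · intro hf
      -- write `f` in finitely many variables
      obtain ⟨V, f', rfl⟩ := MvPolynomial.exists_finset_rename f
      -- choose a common bound `M` for all the Maya diagrams occurring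
      choose P hP using mayaBound_exists
      obtain ⟨M, hM⟩ := (V.image P).exists_le
      have hMb : ∀ S : Maya, S ∈ V → mayaBound M S := fun S hS =>
        mayaBound_mono (hM (P S) (Finset.mem_image_of_mem P hS)) (hP S)
      -- transfer `f'` to a polynomial in the variables `C_{M}`
      set hmap : {S : Maya // S ∈ V} → CIdx M :=
        fun S => mayaFin M S.1 (hMb S.1 S.2) with hmap_def
      set g : MvPolynomial (CIdx M) k := MvPolynomial.rename hmap f' with hg_def
      have hfac : (iota M).comp (MvPolynomial.rename hmap)
          = (MvPolynomial.rename (Subtype.val) :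
              MvPolynomial {S : Maya // S ∈ V} k →ₐ[k] MvPolynomial Maya k) := by
        apply MvPolynomial.algHom_ext
        intro S
        simp only [AlgHom.comp_apply, rename_X]
        exact hiota M (hmap S) S.1 (mayaFin_set M S.1 (hMb S.1 S.2))
      have hfg : iota M g = MvPolynomial.rename (Subtype.val) f' := by
        rw [hg_def, ← AlgHom.comp_apply, hfac]
      -- `φ'_{M}(g)` dies at some stage `q ≥ M`
      have h0 : Ring.DirectLimit.of (fun p : PIdx => ↥(DeltaSub k p.1.1 p.1.2))
          (fun p q h => ⇑(rS p q h)) M (phiFin' k M g) = 0 := by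
        rw [← key M g, hfg]
        exact hf
      obtain ⟨q, hMq, hq0⟩ := Ring.DirectLimit.of.zero_exact
        (f' := fun p q h => (rS p q h).toRingHom) h0
      refine ⟨q, MvPolynomial.rename (cmap hMq) g, ?_, ?_⟩
      · have := DFunLike.congr_fun (phiFin'_factor rS hrS hMq) g
        simp only [AlgHom.comp_apply] at this
        have hz : phiFin' k q (MvPolynomial.rename (cmap hMq) g) = 0 := by
          rw [this]
          exact hq0
        rw [← val_phiFin', hz]
        rfl
      · have hic : (iota q).comp (MvPolynomial.rename (cmap hMq)) = iota M := by
          apply MvPolynomial.algHom_ext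
          intro I
          simp only [AlgHom.comp_apply, rename_X]
          rw [hiota q (cmap hMq I) (toMaya q (cmap hMq I)) rfl, toMaya_cmap,
            hiota M I (toMaya M I) rfl]
        have hq := DFunLike.congr_fun hic g
        simp only [AlgHom.comp_apply] at hq
        rw [hq, hfg]
    · rintro ⟨p, g, hg, rfl⟩
      have hz : phiFin' k p g = 0 := Subtype.ext (by rw [val_phiFin']; exact hg)
      rw [key p g, hz, map_zero]

end
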